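/- Let μ, ν be discrete probability measures on finite sets X, Y partitioned into blocks with positive block masses, let μ̃, ν̃ be the coarsened measures, and let C̄ be the marginally weighted coarse cost C̄_{kℓ} = (1/(μ(X_k)ν(Y_ℓ))) Σ_{x∈X_k, y∈Y_ℓ} ρ(x,y)^p μ(x)ν(y). Then the coarse optimal transport cost upper-bounds the fine one: L_{C̄}(μ̃, ν̃) ≥ L_C(μ, ν), where C_{xy} = ρ(x,y)^p. Consequently L_{C̄}(μ̃, ν̃)^{1/p} ≥ W_p(μ, ν). -/

import Mathlib

/-!
Any coarse coupling `πt` of the block masses lifts to a fine coupling by splitting the mass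
`πt k l` proportionally to `μ(x) ν(y)` over the block `X_k × Y_l`. The fine cost of the lift is
exactly the coarse cost of `πt` against the weighted block averages `C̄`, so every coarse cost is
a fine cost and the infimum over fine couplings can only be smaller. Taking `p`-th roots is
monotone.
-/

open Finset

def IsCoupling {X Y : Type*} [Fintype X] [Fintype Y]
    (π : X → Y → ℝ) (μ : X → ℝ) (ν : Y → ℝ) : Prop :=
  (∀ i j, 0 ≤ π i j) ∧ (∀ i, ∑ j, π i j = μ i) ∧ (∀ j, ∑ i, π i j = ν j)

def transportCost {X Y : Type*} [Fintype X] [Fintype Y]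
    (π : X → Y → ℝ) (C : X → Y → ℝ) : ℝ :=
  ∑ i, ∑ j, π i j * C i j

noncomputable def OTCost {X Y : Type*} [Fintype X] [Fintype Y]
    (C : X → Y → ℝ) (μ : X → ℝ) (ν : Y → ℝ) : ℝ :=
  sInf {t : ℝ | ∃ π, IsCoupling π μ ν ∧ t = transportCost π C}

section Coupling

variable {X Y : Type*} [Fintype X] [Fintype Y]

theorem transportCost_nonneg {π C : X → Y → ℝ} (hπ : ∀ i j, 0 ≤ π i j)
    (hC : ∀ i j, 0 ≤ C i j) : 0 ≤ transportCost π C :=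
  sum_nonneg fun i _ => sum_nonneg fun j _ => mul_nonneg (hπ i j) (hC i j)

theorem OTCost_nonneg {C : X → Y → ℝ} (hC : ∀ i j, 0 ≤ C i j) (μ : X → ℝ) (ν : Y → ℝ) :
    0 ≤ OTCost C μ ν :=
  Real.sInf_nonneg <| by
    rintro t ⟨π, hπ, rfl⟩
    exact transportCost_nonneg hπ.1 hC

theorem isCoupling_mul {μ : X → ℝ} {ν : Y → ℝ} (hμ : ∀ i, 0 ≤ μ i) (hν : ∀ j, 0 ≤ ν j)
    (hμ1 : ∑ i, μ i = 1) (hν1 : ∑ j, ν j = 1) : IsCoupling (fun i j => μ i * ν j) μ ν :=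
  ⟨fun i j => mul_nonneg (hμ i) (hν j),
    fun i => by rw [← mul_sum, hν1, mul_one],
    fun j => by rw [← sum_mul, hμ1, one_mul]⟩

theorem OTCost_le_OTCost_of_forall_exists {X' Y' : Type*} [Fintype X'] [Fintype Y']
    {C : X → Y → ℝ} {μ : X → ℝ} {ν : Y → ℝ} {C' : X' → Y' → ℝ} {μ' : X' → ℝ} {ν' : Y' → ℝ}
    (hC : ∀ i j, 0 ≤ C i j) (hne : ∃ π', IsCoupling π' μ' ν')
    (h : ∀ π', IsCoupling π' μ' ν' →
      ∃ π, IsCoupling π μ ν ∧ transportCost π C = transportCost π' C') :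
    OTCost C μ ν ≤ OTCost C' μ' ν' := by
  obtain ⟨π₀, hπ₀⟩ := hne
  refine csInf_le_csInf ⟨0, ?_⟩ ⟨_, π₀, hπ₀, rfl⟩ ?_
  · rintro t ⟨π, hπ, rfl⟩
    exact transportCost_nonneg hπ.1 hC
  · rintro t ⟨π', hπ', rfl⟩
    obtain ⟨π, hπ, hcost⟩ := h π' hπ'
    exact ⟨π, hπ, hcost.symm⟩

end Coupling

section Coarsening

variable {X Y κ τ : Type*} [Fintype X] [Fintype Y] [Fintype κ] [Fintype τ]
  [DecidableEq κ] [DecidableEq τ]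

theorem sum_fiberwise_comp (kf : X → κ) (G : κ → X → ℝ) :
    ∑ k, ∑ x ∈ univ.filter (fun x => kf x = k), G k x = ∑ x, G (kf x) x := by
  rw [← sum_fiberwise univ kf (fun x => G (kf x) x)]
  exact sum_congr rfl fun k _ => sum_congr rfl fun x hx => by rw [(mem_filter.1 hx).2]

theorem sum_fiberwise_comp₂ (kf : X → κ) (lf : Y → τ) (G : κ → τ → X → Y → ℝ) :
    ∑ k, ∑ l, ∑ x ∈ univ.filter (fun x => kf x = k), ∑ y ∈ univ.filter (fun y => lf y = l),
      G k l x y = ∑ x, ∑ y, G (kf x) (lf y) x y := by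
  simp_rw [sum_comm (γ := τ), sum_fiberwise_comp]

theorem sum_comp_mul_div_blockMass {μ : X → ℝ} {μt : κ → ℝ} (kf : X → κ)
    (hμt : ∀ k, μt k = ∑ x ∈ univ.filter (fun x => kf x = k), μ x) (hμtpos : ∀ k, μt k ≠ 0)
    (g : κ → ℝ) : ∑ x, g (kf x) * (μ x / μt (kf x)) = ∑ k, g k := by
  rw [← sum_fiberwise_comp kf fun k x => g k * (μ x / μt k)]
  refine sum_congr rfl fun k _ => ?_
  rw [← mul_sum, ← sum_div, ← hμt, div_self (hμtpos k), mul_one]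

noncomputable def liftCoupling (kf : X → κ) (lf : Y → τ) (μ : X → ℝ) (ν : Y → ℝ)
    (μt : κ → ℝ) (νt : τ → ℝ) (πt : κ → τ → ℝ) (x : X) (y : Y) : ℝ :=
  πt (kf x) (lf y) * (μ x / μt (kf x)) * (ν y / νt (lf y))

variable {kf : X → κ} {lf : Y → τ} {μ : X → ℝ} {ν : Y → ℝ} {μt : κ → ℝ} {νt : τ → ℝ}

theorem isCoupling_liftCoupling (hμ : ∀ x, 0 ≤ μ x) (hν : ∀ y, 0 ≤ ν y)
    (hμt : ∀ k, μt k = ∑ x ∈ univ.filter (fun x => kf x = k), μ x)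
    (hνt : ∀ l, νt l = ∑ y ∈ univ.filter (fun y => lf y = l), ν y)
    (hμtpos : ∀ k, 0 < μt k) (hνtpos : ∀ l, 0 < νt l) {πt : κ → τ → ℝ}
    (hπt : IsCoupling πt μt νt) : IsCoupling (liftCoupling kf lf μ ν μt νt πt) μ ν := by
  obtain ⟨hπt0, hrow, hcol⟩ := hπt
  refine ⟨fun x y => ?_, fun x => ?_, fun y => ?_⟩
  · exact mul_nonneg (mul_nonneg (hπt0 _ _) (div_nonneg (hμ x) (hμtpos _).le))
      (div_nonneg (hν y) (hνtpos _).le)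
  · calc ∑ y, liftCoupling kf lf μ ν μt νt πt x y
        = μ x / μt (kf x) * ∑ y, πt (kf x) (lf y) * (ν y / νt (lf y)) := by
          rw [mul_sum]
          exact sum_congr rfl fun y _ => by unfold liftCoupling; ring
      _ = μ x := by
          rw [sum_comp_mul_div_blockMass lf hνt (fun l => (hνtpos l).ne'), hrow,
            div_mul_cancel₀ _ (hμtpos _).ne']
  · calc ∑ x, liftCoupling kf lf μ ν μt νt πt x y
        = ν y / νt (lf y) * ∑ x, πt (kf x) (lf y) * (μ x / μt (kf x)) := by
          rw [mul_sum]
          exact sum_congr rfl fun x _ => by unfold liftCoupling; ring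
      _ = ν y := by
          rw [sum_comp_mul_div_blockMass kf hμt (fun k => (hμtpos k).ne') (πt · (lf y)), hcol,
            div_mul_cancel₀ _ (hνtpos _).ne']

theorem transportCost_liftCoupling (C : X → Y → ℝ) {Cbar : κ → τ → ℝ}
    (hCbar : ∀ k l, Cbar k l = (1 / (μt k * νt l)) *
      ∑ x ∈ univ.filter (fun x => kf x = k), ∑ y ∈ univ.filter (fun y => lf y = l),
        C x y * μ x * ν y)
    (πt : κ → τ → ℝ) :
    transportCost (liftCoupling kf lf μ ν μt νt πt) C = transportCost πt Cbar := by
  unfold transportCost liftCoupling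
  rw [← sum_fiberwise_comp₂ kf lf
    fun k l x y => πt k l * (μ x / μt k) * (ν y / νt l) * C x y]
  refine sum_congr rfl fun k _ => sum_congr rfl fun l _ => ?_
  rw [hCbar, mul_sum, mul_sum]
  refine sum_congr rfl fun x _ => ?_
  rw [mul_sum, mul_sum]
  exact sum_congr rfl fun y _ => by ring

end Coarsening

theorem weighted_cost_upper_bound
    {Z : Type*} [MetricSpace Z]
    {X Y : Type*} [Fintype X] [Fintype Y] {K L : ℕ}
    (ι : X → Z) (γ : Y → Z) (p : ℝ) (hp : 1 ≤ p)
    (kf : X → Fin K) (lf : Y → Fin L)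
    (μ : X → ℝ) (ν : Y → ℝ)
    (hμ : (∀ x, 0 ≤ μ x) ∧ ∑ x, μ x = 1)
    (hν : (∀ y, 0 ≤ ν y) ∧ ∑ y, ν y = 1)
    (μt : Fin K → ℝ) (νt : Fin L → ℝ)
    (hμt : ∀ k, μt k = ∑ x ∈ Finset.univ.filter (fun x => kf x = k), μ x)
    (hνt : ∀ l, νt l = ∑ y ∈ Finset.univ.filter (fun y => lf y = l), ν y)
    (hμtpos : ∀ k, 0 < μt k) (hνtpos : ∀ l, 0 < νt l)
    (Cbar : Fin K → Fin L → ℝ)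
    (hCbar : ∀ k l, Cbar k l = (1 / (μt k * νt l)) *
      ∑ x ∈ Finset.univ.filter (fun x => kf x = k),
        ∑ y ∈ Finset.univ.filter (fun y => lf y = l),
          dist (ι x) (γ y) ^ p * μ x * ν y) :
    OTCost (fun x y => dist (ι x) (γ y) ^ p) μ ν ≤ OTCost Cbar μt νt ∧
      (OTCost (fun x y => dist (ι x) (γ y) ^ p) μ ν) ^ (1 / p)
        ≤ (OTCost Cbar μt νt) ^ (1 / p) := by
  obtain ⟨hμ0, hμ1⟩ := hμ
  obtain ⟨hν0, hν1⟩ := hν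
  have hC : ∀ x y, 0 ≤ dist (ι x) (γ y) ^ p := fun x y => Real.rpow_nonneg dist_nonneg p
  have hμt1 : ∑ k, μt k = 1 := by simp only [hμt, sum_fiberwise, hμ1]
  have hνt1 : ∑ l, νt l = 1 := by simp only [hνt, sum_fiberwise, hν1]
  have hle : OTCost (fun x y => dist (ι x) (γ y) ^ p) μ ν ≤ OTCost Cbar μt νt :=
    OTCost_le_OTCost_of_forall_exists hC
      ⟨_, isCoupling_mul (fun k => (hμtpos k).le) (fun l => (hνtpos l).le) hμt1 hνt1⟩
      fun πt hπt => ⟨liftCoupling kf lf μ ν μt νt πt,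
        isCoupling_liftCoupling hμ0 hν0 hμt hνt hμtpos hνtpos hπt,
        transportCost_liftCoupling _ hCbar πt⟩
  exact ⟨hle, Real.rpow_le_rpow (OTCost_nonneg hC μ ν) hle (one_div_nonneg.2 (by linarith))⟩
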